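/- Let n ≥ 1, let 1 ≤ k ≤ n − 1, and let Φ : B_H → B_H be an ℝ-linear map that maps the set P_k of rank-k Hermitian projections surjectively onto itself. Then Φ is trace-preserving: tr Φ(X) = tr X for every X ∈ B_H. -/

import Mathlib

open Matrix

noncomputable section

/-- `BH n` is the real vector space of `n × n` complex Hermitian (self-adjoint) matrices. -/
abbrev BH (n : ℕ) := selfAdjoint (Matrix (Fin n) (Fin n) ℂ)

/-- `projSet n k` is the set of rank-`k` Hermitian projections, viewed inside `BH n`. -/
def projSet (n k : ℕ) : Set (BH n) :=
  {P | (P : Matrix (Fin n) (Fin n) ℂ) * (P : Matrix (Fin n) (Fin n) ℂ) = (P : Matrix (Fin n) (Fin n) ℂ)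
    ∧ (P : Matrix (Fin n) (Fin n) ℂ).rank = k}

/-!
A real-linear functional on Hermitian matrices that vanishes on the rank-`k` projections,
`0 < k < n`, vanishes identically. After conjugation by the unitary diagonalizing a given `X`
it becomes a functional on `ℝⁿ` killing the indicator vector of every `k`-subset, and for
`m ∉ A`, `#A = k`, the identity `∑_{j ∈ A} 1_{A - j + m} + 1_A = k • (e_m + 1_A)` shows that it
kills every `e_m`. Apply this to `tr ∘ Φ - tr`, which vanishes on rank-`k` projections because
the trace of an idempotent matrix is its rank.
-/

open Finset

theorem Finset.sum_sum_insert_erase {ι M : Type*} [DecidableEq ι] [AddCommMonoid M] (e : ι → M)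
    {A : Finset ι} {m : ι} (hm : m ∉ A) :
    ∑ j ∈ A, ∑ i ∈ insert m (A.erase j), e i + ∑ i ∈ A, e i = #A • (e m + ∑ i ∈ A, e i) := by
  have key (j) (hj : j ∈ A) : ∑ i ∈ insert m (A.erase j), e i + e j = e m + ∑ i ∈ A, e i := by
    rw [sum_insert fun h => hm (mem_of_mem_erase h), add_assoc, sum_erase_add _ _ hj]
  rw [← sum_const, ← sum_congr rfl key, sum_add_distrib]

theorem LinearMap.eq_zero_of_apply_sum_single_eq_zero {R M ι : Type*} [Field R] [CharZero R]
    [AddCommGroup M] [Module R M] [Fintype ι] [DecidableEq ι] {k : ℕ} (hk0 : k ≠ 0)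
    (hk : k < Fintype.card ι) (f : (ι → R) →ₗ[R] M)
    (hf : ∀ T : Finset ι, #T = k → f (∑ i ∈ T, Pi.single i 1) = 0) : f = 0 := by
  have hsingle (m : ι) : f (Pi.single m 1) = 0 := by
    obtain ⟨A, hA, hAk⟩ := exists_subset_card_eq (s := univ.erase m) (n := k) (by
      rw [card_erase_of_mem (mem_univ m), card_univ]; omega)
    have hm : m ∉ A := fun h => by simpa using hA h
    have h := congrArg f (sum_sum_insert_erase (fun i => Pi.single i (1 : R)) hm)
    rw [map_add, map_sum, map_nsmul, map_add, hf A hAk, add_zero, add_zero, hAk,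
      sum_eq_zero fun j hj => hf _ ?_, ← Nat.cast_smul_eq_nsmul R, eq_comm, smul_eq_zero] at h
    · exact h.resolve_left (Nat.cast_ne_zero.mpr hk0)
    · rw [card_insert_of_notMem fun h => hm (mem_of_mem_erase h), card_erase_of_mem hj, hAk]
      omega
  refine pi_ext fun i x => ?_
  rw [← mul_one x, ← smul_eq_mul, Pi.single_smul, map_smul, hsingle, smul_zero, zero_apply]

theorem Matrix.trace_eq_rank_of_isIdempotentElem {ι K : Type*} [Fintype ι] [DecidableEq ι]
    [Field K] {A : Matrix ι ι K} (hA : IsIdempotentElem A) : A.trace = A.rank := by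
  have hA' : IsIdempotentElem (toLin' A) := hA.map toLinAlgEquiv'
  rw [← trace_toLin'_eq, (LinearMap.IsIdempotentElem.isProj_range _ hA').trace]
  rfl

theorem Matrix.rank_unitary_mul_mul_star {ι R : Type*} [Fintype ι] [DecidableEq ι] [CommRing R]
    [StarRing R] (U : unitaryGroup ι R) (A : Matrix ι ι R) :
    ((U : Matrix ι ι R) * A * star (U : Matrix ι ι R)).rank = A.rank := by
  rw [← Unitary.coe_star, rank_mul_eq_left_of_isUnit_det _ _ (UnitaryGroup.det_isUnit (star U)),
    rank_mul_eq_right_of_isUnit_det _ _ (UnitaryGroup.det_isUnit U)]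

theorem Matrix.isIdempotentElem_diagonal_ite_mem {ι R : Type*} [Fintype ι] [DecidableEq ι]
    [Semiring R] (T : Finset ι) :
    IsIdempotentElem (diagonal fun j => if j ∈ T then (1 : R) else 0) := by
  rw [IsIdempotentElem, diagonal_mul_diagonal]
  congr 1
  ext j
  split_ifs <;> simp

theorem Matrix.rank_diagonal_ite_mem {ι K : Type*} [Fintype ι] [DecidableEq ι] [Field K]
    (T : Finset ι) : (diagonal fun j => if j ∈ T then (1 : K) else 0).rank = #T := by
  classical
  rw [rank_diagonal, Fintype.card_subtype]
  congr 1
  ext j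
  simp

section

variable {ι 𝕜 : Type*} [Fintype ι] [DecidableEq ι] [RCLike 𝕜]

def selfAdjointTrace : selfAdjoint (Matrix ι ι 𝕜) →ₗ[ℝ] 𝕜 :=
  (traceLinearMap ι ℝ 𝕜).comp (selfAdjoint.submodule ℝ _).subtype

def unitaryConjDiagonal (U : unitaryGroup ι 𝕜) : (ι → ℝ) →ₗ[ℝ] selfAdjoint (Matrix ι ι 𝕜) where
  toFun d := ⟨U * diagonal (fun i => (d i : 𝕜)) * star (U : Matrix ι ι 𝕜),
    (isHermitian_diagonal_of_self_adjoint _ (by ext; simp)).isSelfAdjoint.conjugate _⟩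
  map_add' d e := Subtype.ext <| by
    simp only [AddSubgroup.coe_add, ← add_mul, ← mul_add, diagonal_add, Pi.add_apply,
      RCLike.ofReal_add]
  map_smul' c d := Subtype.ext <| by
    change (U : Matrix ι ι 𝕜) * _ * _ = c • ((U : Matrix ι ι 𝕜) * _ * _)
    rw [← smul_mul_assoc, ← mul_smul_comm, ← diagonal_smul]
    congr
    funext i
    simp [RCLike.real_smul_eq_coe_mul]

theorem coe_unitaryConjDiagonal_sum_single (U : unitaryGroup ι 𝕜) (T : Finset ι) :
    (unitaryConjDiagonal U (∑ i ∈ T, Pi.single i 1) : Matrix ι ι 𝕜)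
      = (U : Matrix ι ι 𝕜) * diagonal (fun j => if j ∈ T then 1 else 0) *
          star (U : Matrix ι ι 𝕜) := by
  change (U : Matrix ι ι 𝕜) * _ * _ = _
  congr 3
  ext j
  simp [Finset.sum_apply, Pi.single_apply]

theorem Matrix.IsHermitian.unitaryConjDiagonal_eigenvalues {A : Matrix ι ι 𝕜}
    (hA : A.IsHermitian) :
    unitaryConjDiagonal hA.eigenvectorUnitary hA.eigenvalues = ⟨A, hA.isSelfAdjoint⟩ :=
  Subtype.ext hA.spectral_theorem.symm

end

theorem trace_eq_of_mem_projSet {n k : ℕ} {P : BH n} (hP : P ∈ projSet n k) :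
    (P : Matrix (Fin n) (Fin n) ℂ).trace = k := by
  rw [trace_eq_rank_of_isIdempotentElem hP.1, hP.2]

theorem unitaryConjDiagonal_sum_single_mem_projSet {n : ℕ} (U : unitaryGroup (Fin n) ℂ)
    (T : Finset (Fin n)) : unitaryConjDiagonal U (∑ i ∈ T, Pi.single i 1) ∈ projSet n #T := by
  rw [projSet, Set.mem_ofPred_eq, coe_unitaryConjDiagonal_sum_single, rank_unitary_mul_mul_star,
    rank_diagonal_ite_mem]
  exact ⟨(isIdempotentElem_diagonal_ite_mem (R := ℂ) T).map (Unitary.conjStarAlgAut ℂ _ U), rfl⟩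

theorem LinearMap.eq_zero_of_forall_mem_projSet {M : Type*} [AddCommGroup M] [Module ℝ M]
    {n k : ℕ} (hk0 : k ≠ 0) (hkn : k < n) (f : BH n →ₗ[ℝ] M)
    (hf : ∀ P ∈ projSet n k, f P = 0) : f = 0 := by
  ext X
  have hX : (X : Matrix (Fin n) (Fin n) ℂ).IsHermitian := X.2.isHermitian
  have hfU : f ∘ₗ unitaryConjDiagonal hX.eigenvectorUnitary = 0 :=
    eq_zero_of_apply_sum_single_eq_zero hk0 (by simpa using hkn) _ fun T hT =>
      hf _ (hT ▸ unitaryConjDiagonal_sum_single_mem_projSet _ T)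
  simpa [hX.unitaryConjDiagonal_eigenvalues] using congr($hfU hX.eigenvalues)

theorem stmt_10_general (n k : ℕ) (hk1 : 1 ≤ k) (hkn : k ≤ n - 1)
    (Φ : BH n →ₗ[ℝ] BH n)
    (hΦ : (⇑Φ) '' projSet n k = projSet n k) :
    ∀ X : BH n, (Φ X : Matrix (Fin n) (Fin n) ℂ).trace = (X : Matrix (Fin n) (Fin n) ℂ).trace := by
  have hdefect : selfAdjointTrace ∘ₗ Φ - selfAdjointTrace = 0 := by
    refine LinearMap.eq_zero_of_forall_mem_projSet (k := k) (by omega) (by omega) _ fun P hP => ?_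
    have hΦP : Φ P ∈ projSet n k := hΦ ▸ Set.mem_image_of_mem Φ hP
    change (Φ P : Matrix (Fin n) (Fin n) ℂ).trace - (P : Matrix (Fin n) (Fin n) ℂ).trace = 0
    rw [trace_eq_of_mem_projSet hΦP, trace_eq_of_mem_projSet hP, sub_self]
  exact fun X => sub_eq_zero.mp congr($hdefect X)

theorem stmt_10 (n k : ℕ) (hn : 1 ≤ n) (hk1 : 1 ≤ k) (hkn : k ≤ n - 1)
    (Φ : BH n →ₗ[ℝ] BH n)
    (hΦ : (⇑Φ) '' projSet n k = projSet n k) :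
    ∀ X : BH n, (Φ X : Matrix (Fin n) (Fin n) ℂ).trace = (X : Matrix (Fin n) (Fin n) ℂ).trace :=
  stmt_10_general n k hk1 hkn Φ hΦ
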